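/- Let ρ1 ∈ (0,1) and ρ2 ∈ (0,1−ρ1). Suppose C' is a real 2×2 matrix with C'₁₂ = C'₂₁, C'₁₁ = ρ1(1−ρ1), C'₁₁ + C'₁₂ + C'₂₁ + C'₂₂ = (ρ1+ρ2)(1−ρ1−ρ2), and A·C' = C'·Aᵀ. Then C'₁₂ = C'₂₁ = −ρ1(1−ρ1) and C'₂₂ = ρ2(1−ρ2) + 2ρ1(1−ρ1) − 2ρ1ρ2; that is, C' equals the susceptibility matrix C. -/

import Mathlib

open Matrix

/-- The Jacobian of the average current of the two-species TASEP. -/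
def matA (ρ1 ρ2 : ℝ) : Matrix (Fin 2) (Fin 2) ℝ :=
  !![1 - 2*ρ1, 0; -2*ρ2, 1 - 2*(ρ1 + ρ2)]

/-- The susceptibility matrix of the two-species TASEP. -/
def matC (ρ1 ρ2 : ℝ) : Matrix (Fin 2) (Fin 2) ℝ :=
  !![ρ1*(1 - ρ1), -(ρ1*(1 - ρ1));
     -(ρ1*(1 - ρ1)), ρ2*(1 - ρ2) + 2*ρ1*(1 - ρ1) - 2*ρ1*ρ2]

theorem Matrix.lowerTriangular_mul_sub_mul_transpose_apply_zero_one {R : Type*} [CommRing R]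
    (a b d : R) (C : Matrix (Fin 2) (Fin 2) R) :
    (!![a, 0; b, d] * C - C * (!![a, 0; b, d])ᵀ) 0 1 = (a - d) * C 0 1 - b * C 0 0 := by
  simp only [sub_apply, mul_apply, Fin.sum_univ_two, transpose_apply, of_apply, cons_val',
    cons_val_zero, cons_val_one, empty_val', cons_val_fin_one]
  ring

theorem apply_zero_one_eq_neg_of_matA_mul_eq_mul_transpose {ρ1 ρ2 : ℝ} (hρ2 : ρ2 ≠ 0)
    {C : Matrix (Fin 2) (Fin 2) ℝ} (hAC : matA ρ1 ρ2 * C = C * (matA ρ1 ρ2)ᵀ) :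
    C 0 1 = -C 0 0 := by
  have h := Matrix.lowerTriangular_mul_sub_mul_transpose_apply_zero_one
    (1 - 2*ρ1) (-2*ρ2) (1 - 2*(ρ1 + ρ2)) C
  rw [← matA, hAC, sub_self, Matrix.zero_apply] at h
  have : 2 * ρ2 * (C 0 1 + C 0 0) = 0 := by linear_combination -h
  linear_combination (mul_eq_zero.mp this).resolve_left (mul_ne_zero two_ne_zero hρ2)

theorem susceptibility_unique_general
    (ρ1 ρ2 : ℝ) (h2 : ρ2 ∈ Set.Ioo (0:ℝ) (1 - ρ1))
    (C' : Matrix (Fin 2) (Fin 2) ℝ)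
    (hsymm : C' 0 1 = C' 1 0)
    (h11 : C' 0 0 = ρ1*(1 - ρ1))
    (hsum : C' 0 0 + C' 0 1 + C' 1 0 + C' 1 1 = (ρ1 + ρ2)*(1 - ρ1 - ρ2))
    (hAC : matA ρ1 ρ2 * C' = C' * (matA ρ1 ρ2)ᵀ) :
    C' 0 1 = -(ρ1*(1 - ρ1)) ∧ C' 1 0 = -(ρ1*(1 - ρ1)) ∧
      C' 1 1 = ρ2*(1 - ρ2) + 2*ρ1*(1 - ρ1) - 2*ρ1*ρ2 ∧ C' = matC ρ1 ρ2 := by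
  have h01 : C' 0 1 = -(ρ1*(1 - ρ1)) := by
    rw [apply_zero_one_eq_neg_of_matA_mul_eq_mul_transpose h2.1.ne' hAC, h11]
  have h10 : C' 1 0 = -(ρ1*(1 - ρ1)) := hsymm ▸ h01
  have h22 : C' 1 1 = ρ2*(1 - ρ2) + 2*ρ1*(1 - ρ1) - 2*ρ1*ρ2 := by
    linear_combination hsum - h11 - h01 - h10
  refine ⟨h01, h10, h22, ?_⟩
  rw [eta_fin_two C', h11, h01, h10, h22, matC]

/-- Any symmetric matrix with the prescribed diagonal sums satisfying A·C' = C'·Aᵀ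
is the susceptibility matrix. -/
theorem susceptibility_unique
    (ρ1 ρ2 : ℝ) (h1 : ρ1 ∈ Set.Ioo (0:ℝ) 1) (h2 : ρ2 ∈ Set.Ioo (0:ℝ) (1 - ρ1))
    (C' : Matrix (Fin 2) (Fin 2) ℝ)
    (hsymm : C' 0 1 = C' 1 0)
    (h11 : C' 0 0 = ρ1*(1 - ρ1))
    (hsum : C' 0 0 + C' 0 1 + C' 1 0 + C' 1 1 = (ρ1 + ρ2)*(1 - ρ1 - ρ2))
    (hAC : matA ρ1 ρ2 * C' = C' * (matA ρ1 ρ2)ᵀ) :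
    C' 0 1 = -(ρ1*(1 - ρ1)) ∧ C' 1 0 = -(ρ1*(1 - ρ1)) ∧
      C' 1 1 = ρ2*(1 - ρ2) + 2*ρ1*(1 - ρ1) - 2*ρ1*ρ2 ∧ C' = matC ρ1 ρ2 :=
  susceptibility_unique_general ρ1 ρ2 h2 C' hsymm h11 hsum hAC
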